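/- Let X (sum of phase-type claims over [0,t]), H₁, H₂ be independent nonnegative random variables, and let N be an independent Poisson random variable with mean λεt. Define L(x) = P(X + Σ_{i=1}^{N'} Hᵢ > x) where the Hᵢ are i.i.d. copies of H₁ independent of X and N' = N, and define the corrected discard approximation A(x) = e^{-λεt} P(X > x) + (1 - e^{-λεt}) P(X + H₁ > x). Then for all x: P(N ≥ 2)·[P(X + H₁ + H₂ > x) - P(X + H₁ > x)] ≤ L(x) - A(x) ≤ ε²(λt)². In particular L(x) ≥ A(x), so A is a lower bound for the exact aggregate loss tail. -/

import Mathlib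

/-!
Conditioning on the number `k` of heavy claims writes `L x` as the Poisson mixture
`∑ₖ P(N = k) qₖ` of the tails `qₖ = P(X + H₁ + ⋯ + Hₖ > x)`, while `A x` keeps the `k = 0` term
and replaces every `qₖ` with `k ≥ 1` by `q₁`; hence `L x - A x = ∑_{k ≥ 2} P(N = k) (qₖ - q₁)`.
Adding a nonnegative summand can only increase a tail, so `qₖ` is nondecreasing in `k` and lies
in `[0, 1]`. Each summand therefore lies between `P(N = k) (q₂ - q₁)` and `P(N = k)`, and
`P(N ≥ 2) = 1 - e^{-p} - p e^{-p} ≤ p²` for `p = λεt`.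
-/

open MeasureTheory Filter Set

/-- `n`-fold convolution of a measure on `ℝ` (with `μ^{*0} = δ₀`). -/
noncomputable def convPow (μ : Measure ℝ) : ℕ → Measure ℝ
  | 0 => Measure.dirac 0
  | n + 1 => Measure.conv (convPow μ n) μ

open Real

namespace MeasureTheory.Measure

theorem conv_apply_Ioi (μ ν : Measure ℝ) [SFinite ν] (x : ℝ) :
    (μ ∗ ν) (Ioi x) = ∫⁻ a, ν (Ioi (x - a)) ∂μ := by
  rw [conv, map_apply (by fun_prop) measurableSet_Ioi,
    prod_apply (measurableSet_Ioi.preimage (by fun_prop))]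
  congr 1 with a
  congr 1 with b
  simp [sub_lt_iff_lt_add']

theorem apply_Ioi_le_conv_apply_Ioi (μ ν : Measure ℝ) [IsProbabilityMeasure ν]
    (hν : ν (Iio 0) = 0) (x : ℝ) : μ (Ioi x) ≤ (μ ∗ ν) (Ioi x) := by
  have hν_nonneg : ν (Ici 0) = 1 := by
    rw [← compl_Iio, prob_compl_eq_one_iff measurableSet_Iio, hν]
  calc μ (Ioi x) = ∫⁻ _ in Ioi x, 1 ∂μ := (setLIntegral_one _).symm
    _ ≤ ∫⁻ a in Ioi x, ν (Ioi (x - a)) ∂μ := by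
      refine setLIntegral_mono' measurableSet_Ioi fun a (ha : x < a) => ?_
      rw [← hν_nonneg]
      exact measure_mono fun b (hb : 0 ≤ b) => show x - a < b by linarith
    _ ≤ (μ ∗ ν) (Ioi x) := by
      rw [conv_apply_Ioi]
      exact setLIntegral_le_lintegral _ _

end MeasureTheory.Measure

instance isProbabilityMeasure_convPow (μ : Measure ℝ) [IsProbabilityMeasure μ] (k : ℕ) :
    IsProbabilityMeasure (convPow μ k) := by
  induction k with
  | zero => rw [convPow]; infer_instance
  | succ k ih => rw [convPow]; infer_instance

theorem convPow_zero (μ : Measure ℝ) : convPow μ 0 = Measure.dirac 0 := rfl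

theorem convPow_one (μ : Measure ℝ) [SFinite μ] : convPow μ 1 = μ :=
  Measure.dirac_zero_conv μ

theorem convPow_two (μ : Measure ℝ) [SFinite μ] : convPow μ 2 = μ ∗ μ := by
  rw [convPow, convPow_one]

theorem monotone_conv_convPow_apply_Ioi (μ ν : Measure ℝ) [IsProbabilityMeasure ν]
    (hν : ν (Iio 0) = 0) (x : ℝ) : Monotone fun k => (μ ∗ convPow ν k) (Ioi x) :=
  monotone_nat_of_le_succ fun k => by
    simpa only [convPow, Measure.conv_assoc] using
      (μ ∗ convPow ν k).apply_Ioi_le_conv_apply_Ioi ν hν x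

def correctedDiscard (w q : ℕ → ℝ) : ℝ := w 0 * q 0 + (1 - w 0) * q 1

section CorrectedDiscard

variable {w q : ℕ → ℝ}

theorem hasSum_mul_sub_correctedDiscard (hw : HasSum w 1) (hwq : Summable fun k => w k * q k) :
    HasSum (fun k => w (k + 2) * (q (k + 2) - q 1)) (∑' k, w k * q k - correctedDiscard w q) := by
  have h : HasSum (fun k => w k * (q k - q 1)) (∑' k, w k * q k - q 1) := by
    simpa only [mul_sub, one_mul] using hwq.hasSum.sub (hw.mul_right (q 1))
  have hS : ∑' k, w k * q k - correctedDiscard w q =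
      ∑' k, w k * q k - q 1 - ∑ i ∈ Finset.range 2, w i * (q i - q 1) := by
    rw [correctedDiscard, Finset.sum_range_succ, Finset.sum_range_one]
    ring
  rw [hS]
  exact (hasSum_nat_add_iff' 2).mpr h

theorem correctedDiscard_error_bounds (hw₀ : ∀ k, 0 ≤ w k) (hw : HasSum w 1)
    (hq : Monotone q) (hq₀ : 0 ≤ q 0) (hq₁ : ∀ k, q k ≤ 1) :
    (1 - w 0 - w 1) * (q 2 - q 1) ≤ ∑' k, w k * q k - correctedDiscard w q ∧
      ∑' k, w k * q k - correctedDiscard w q ≤ 1 - w 0 - w 1 := by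
  have hwq : Summable fun k => w k * q k :=
    .of_nonneg_of_le (fun k => mul_nonneg (hw₀ k) (hq₀.trans (hq k.zero_le)))
      (fun k => mul_le_of_le_one_right (hw₀ k) (hq₁ k)) hw.summable
  have hdiff := hasSum_mul_sub_correctedDiscard hw hwq
  have htail : HasSum (fun k => w (k + 2)) (1 - w 0 - w 1) := by
    have := (hasSum_nat_add_iff' 2).mpr hw
    simpa only [Finset.sum_range_succ, Finset.sum_range_zero, zero_add, sub_add_eq_sub_sub]
      using this
  constructor
  · refine hasSum_le (fun k => ?_) (htail.mul_right _) hdiff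
    exact mul_le_mul_of_nonneg_left (by linarith [hq (show 2 ≤ k + 2 by omega)]) (hw₀ _)
  · refine hasSum_le (fun k => ?_) hdiff htail
    exact mul_le_of_le_one_right (hw₀ _) (by linarith [hq₁ (k + 2), hq (show 0 ≤ 1 by omega)])

end CorrectedDiscard

theorem one_sub_exp_neg_sub_mul_exp_neg_le_sq {p : ℝ} (hp : -1 ≤ p) :
    1 - exp (-p) - p * exp (-p) ≤ p ^ 2 := by
  nlinarith [add_one_le_exp (-p)]

theorem loss_corrected_discard_error_bounds_general
    (lam t ε : ℝ) (hlam : 0 < lam) (ht : 0 < t) (hε : ε ∈ Set.Ioo (0 : ℝ) 1)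
    (μX μH : Measure ℝ) [IsProbabilityMeasure μX] [IsProbabilityMeasure μH]
    (hHsupp : μH (Set.Iio 0) = 0)
    (pois : ℕ → ℝ)
    (hpois : ∀ k : ℕ, pois k =
      Real.exp (-(lam * ε * t)) * (lam * ε * t) ^ k / (k.factorial : ℝ))
    (L A : ℝ → ℝ)
    (hL : ∀ x, L x = ∑' k : ℕ,
      pois k * ((Measure.conv μX (convPow μH k)) (Set.Ioi x)).toReal)
    (hA : ∀ x, A x =
      Real.exp (-(lam * ε * t)) * (μX (Set.Ioi x)).toReal +
        (1 - Real.exp (-(lam * ε * t))) *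
          ((Measure.conv μX μH) (Set.Ioi x)).toReal) :
    ∀ x : ℝ,
      (1 - Real.exp (-(lam * ε * t)) -
          lam * ε * t * Real.exp (-(lam * ε * t))) *
        (((Measure.conv (Measure.conv μX μH) μH) (Set.Ioi x)).toReal -
            ((Measure.conv μX μH) (Set.Ioi x)).toReal)
        ≤ L x - A x ∧
      L x - A x ≤ ε ^ 2 * (lam * t) ^ 2 := by
  intro x
  set p := lam * ε * t
  have hp : 0 ≤ p := by have := hε.1; positivity
  have hw : HasSum pois 1 := by
    rw [funext hpois]
    exact ProbabilityTheory.hasSum_one_poissonMeasure ⟨p, hp⟩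
  have hpois₀ : pois 0 = exp (-p) := by simp [hpois]
  have hpois₁ : pois 1 = p * exp (-p) := by simp [hpois, mul_comm]
  have hq : Monotone fun k => ((μX ∗ convPow μH k) (Ioi x)).toReal := fun m n hmn =>
    ENNReal.toReal_mono (measure_ne_top _ _) (monotone_conv_convPow_apply_Ioi μX μH hHsupp x hmn)
  obtain ⟨hlower, hupper⟩ := correctedDiscard_error_bounds
    (fun k => by rw [hpois]; positivity) hw hq ENNReal.toReal_nonneg fun _ => measureReal_le_one
  simp only [correctedDiscard, convPow_zero, convPow_one, convPow_two, Measure.conv_dirac_zero,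
    ← Measure.conv_assoc, hpois₀, hpois₁, ← hL, ← hA] at hlower hupper
  have htail_le_sq := one_sub_exp_neg_sub_mul_exp_neg_le_sq (show -1 ≤ p by linarith)
  exact ⟨hlower, hupper.trans (htail_le_sq.trans_eq (by ring))⟩

/-- Error bounds for the corrected discard approximation of the aggregate loss
in `[0,t]`: `P(N_H ≥ 2)·[P(X+H₁+H₂ > x) - P(X+H₁ > x)] ≤ L(x) - A(x) ≤ ε²(λt)²`.
Here `L` is the exact aggregate loss tail (conditioning on the Poisson number
`N_H` of heavy-tailed claims, with mean `λεt`) and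
`A(x) = e^{-λεt} P(X > x) + (1-e^{-λεt}) P(X+H₁ > x)`. -/
theorem loss_corrected_discard_error_bounds
    (lam t ε : ℝ) (hlam : 0 < lam) (ht : 0 < t) (hε : ε ∈ Set.Ioo (0 : ℝ) 1)
    (μX μH : Measure ℝ) [IsProbabilityMeasure μX] [IsProbabilityMeasure μH]
    (hXsupp : μX (Set.Iio 0) = 0) (hHsupp : μH (Set.Iio 0) = 0)
    (pois : ℕ → ℝ)
    (hpois : ∀ k : ℕ, pois k =
      Real.exp (-(lam * ε * t)) * (lam * ε * t) ^ k / (k.factorial : ℝ))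
    (L A : ℝ → ℝ)
    (hL : ∀ x, L x = ∑' k : ℕ,
      pois k * ((Measure.conv μX (convPow μH k)) (Set.Ioi x)).toReal)
    (hA : ∀ x, A x =
      Real.exp (-(lam * ε * t)) * (μX (Set.Ioi x)).toReal +
        (1 - Real.exp (-(lam * ε * t))) *
          ((Measure.conv μX μH) (Set.Ioi x)).toReal) :
    ∀ x : ℝ,
      (1 - Real.exp (-(lam * ε * t)) -
          lam * ε * t * Real.exp (-(lam * ε * t))) *
        (((Measure.conv (Measure.conv μX μH) μH) (Set.Ioi x)).toReal -
            ((Measure.conv μX μH) (Set.Ioi x)).toReal)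
        ≤ L x - A x ∧
      L x - A x ≤ ε ^ 2 * (lam * t) ^ 2 :=
  loss_corrected_discard_error_bounds_general lam t ε hlam ht hε μX μH hHsupp pois hpois L A hL hA
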